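/- A nondegenerate finite quadratic form (𝓛, q) is odd (i.e., there exists an element x ∈ 𝓛 of order 2 with q(x) ≠ 0 mod ℤ) if and only if 𝓛 contains ⟨1/2⟩ or ⟨−1/2⟩ as an orthogonal direct summand. -/

import Mathlib

noncomputable section

abbrev QmodTwo : Type := ℚ ⧸ AddSubgroup.zmultiples (2 : ℚ)
abbrev QmodOne : Type := ℚ ⧸ AddSubgroup.zmultiples (1 : ℚ)

def qmk : ℚ → QmodTwo := QuotientAddGroup.mk
def qmk1 : ℚ → QmodOne := QuotientAddGroup.mk

/-- The doubling homomorphism `ℚ/ℤ → ℚ/2ℤ`, `r ↦ 2r`. -/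
def dbl : QmodOne →+ QmodTwo :=
  QuotientAddGroup.map _ _ (AddMonoidHom.mk' (fun r : ℚ => 2 * r) (by intro a b; ring)) (by
    intro x hx
    obtain ⟨k, hk⟩ := AddSubgroup.mem_zmultiples_iff.mp hx
    refine AddSubgroup.mem_comap.mpr (AddSubgroup.mem_zmultiples_iff.mpr ⟨k, ?_⟩)
    simp only [AddMonoidHom.mk'_apply, ← hk, zsmul_eq_mul]
    ring)

/-- The natural projection `ℚ/2ℤ → ℚ/ℤ`. -/
def toQmodOne : QmodTwo →+ QmodOne :=
  QuotientAddGroup.map _ _ (AddMonoidHom.id ℚ) (by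
    intro x hx
    obtain ⟨k, hk⟩ := AddSubgroup.mem_zmultiples_iff.mp hx
    exact AddSubgroup.mem_comap.mpr (AddSubgroup.mem_zmultiples_iff.mpr ⟨2 * k, by
      simp only [AddMonoidHom.id_apply, ← hk, zsmul_eq_mul]
      push_cast
      ring⟩))

/-- `exp(iπ t)` for `t ∈ ℚ/2ℤ`. -/
def ePi : QmodTwo → ℂ :=
  Quotient.lift (fun r : ℚ => Complex.exp (Real.pi * Complex.I * (r : ℂ))) (by
    intro a b hab
    have h : -a + b ∈ AddSubgroup.zmultiples (2:ℚ) := QuotientAddGroup.leftRel_apply.mp hab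
    obtain ⟨k, hk⟩ := AddSubgroup.mem_zmultiples_iff.mp h
    have hb : (b : ℚ) = a + k * 2 := by
      have := hk
      rw [zsmul_eq_mul] at this
      linarith [this]
    rw [hb]
    push_cast
    rw [mul_add, Complex.exp_add]

    have : (Real.pi : ℂ) * Complex.I * ((k:ℂ) * 2) = (k : ℤ) * (2 * Real.pi * Complex.I) := by
      push_cast; ring
    rw [this, Complex.exp_int_mul_two_pi_mul_I, mul_one])

structure FinQuadForm (L : Type) [AddCommGroup L] where
  q : L → QmodTwo
  b : L → L → QmodOne
  b_symm : ∀ x y, b x y = b y x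
  b_add : ∀ x y z, b (x + y) z = b x z + b y z
  q_zsmul : ∀ (n : ℤ) (x : L), q (n • x) = (n ^ 2 : ℤ) • q x
  q_add : ∀ x y, q (x + y) - q x - q y = dbl (b x y)

variable {L : Type} [AddCommGroup L]

/-- The adjoint homomorphism `x ↦ b(x, ·)` into `Hom(L, ℚ/ℤ)`. -/
def FinQuadForm.toHom (F : FinQuadForm L) (x : L) : L →+ QmodOne :=
  AddMonoidHom.mk' (fun y => F.b x y) (fun y z => by
    show F.b x (y + z) = F.b x y + F.b x z
    rw [F.b_symm x (y + z), F.b_add, F.b_symm y x, F.b_symm z x])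

/-- Nondegeneracy: `x ↦ b(x, ·)` is an isomorphism onto `Hom(L, ℚ/ℤ)`. -/
def FinQuadForm.Nondegenerate (F : FinQuadForm L) : Prop :=
  Function.Bijective F.toHom

/-!
If `2x = 0`, then `0 = q(2x) = 2q(x) + 2b(x,x)` in `ℚ/2ℤ`, so `b(x,x) = -q(x)` in `ℚ/ℤ`, which is
`1/2` exactly when `x` is odd. As `b(x,·)` takes values in the `2`-torsion `{0, 1/2}` of `ℚ/ℤ`,
every `y` has `y` or `y - x` orthogonal to `x`, whence `𝓛 = ℤx ⊕ x^⊥`. Finally `q(x)` is killed by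
`4` but not by `2` in `ℚ/2ℤ`, i.e. `q(x) = ±1/2`.
-/

lemma qmk_eq_iff (a b : ℚ) : qmk a = qmk b ↔ ∃ k : ℤ, a - b = 2 * k := by
  rw [qmk, QuotientAddGroup.eq_iff_sub_mem, AddSubgroup.mem_zmultiples_iff]
  simp only [zsmul_eq_mul, mul_comm (2 : ℚ), eq_comm]

lemma qmk1_eq_iff (a b : ℚ) : qmk1 a = qmk1 b ↔ ∃ k : ℤ, a - b = k := by
  rw [qmk1, QuotientAddGroup.eq_iff_sub_mem, AddSubgroup.mem_zmultiples_iff]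
  simp only [zsmul_eq_mul, mul_one, eq_comm]

lemma qmk1_half_ne_zero : qmk1 (1 / 2) ≠ 0 := by
  intro h
  obtain ⟨k, hk⟩ := (qmk1_eq_iff _ 0).mp h
  have : (2 * k : ℤ) = 1 := by exact_mod_cast (by linarith : (2 * k : ℚ) = 1)
  omega

lemma two_nsmul_qmk (r : ℚ) : 2 • qmk r = qmk (2 * r) := by
  rw [qmk, ← QuotientAddGroup.mk_nsmul, nsmul_eq_mul, Nat.cast_ofNat]

lemma two_nsmul_qmk1 (r : ℚ) : 2 • qmk1 r = qmk1 (2 * r) := by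
  rw [qmk1, ← QuotientAddGroup.mk_nsmul, nsmul_eq_mul, Nat.cast_ofNat]

lemma dbl_toQmodOne (s : QmodTwo) : dbl (toQmodOne s) = 2 • s := by
  induction s using QuotientAddGroup.induction_on with
  | H r => exact (two_nsmul_qmk r).symm

lemma dbl_injective : Function.Injective dbl := by
  refine (injective_iff_map_eq_zero dbl).mpr fun t ht => ?_
  induction t using QuotientAddGroup.induction_on with
  | H r =>
    obtain ⟨k, hk⟩ := (qmk_eq_iff (2 * r) 0).mp ht
    exact (qmk1_eq_iff r 0).mpr ⟨k, by linarith⟩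

lemma eq_half_of_two_nsmul_eq_zero {t : QmodOne} (h2 : 2 • t = 0) (h0 : t ≠ 0) :
    t = qmk1 (1 / 2) := by
  induction t using QuotientAddGroup.induction_on with
  | H s =>
    obtain ⟨j, hj⟩ := (qmk1_eq_iff (2 * s) 0).mp ((two_nsmul_qmk1 s).symm.trans h2)
    rcases Int.even_or_odd j with ⟨c, rfl⟩ | ⟨c, rfl⟩
    · exact absurd ((qmk1_eq_iff s 0).mpr ⟨c, by push_cast at hj; linarith⟩) h0
    · exact (qmk1_eq_iff s _).mpr ⟨c, by push_cast at hj; linarith⟩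

lemma eq_half_or_eq_neg_half {s : QmodTwo} (h4 : 4 • s = 0) (hs : toQmodOne s ≠ 0) :
    s = qmk (1 / 2) ∨ s = qmk (-(1 / 2)) := by
  have h2 : 2 • toQmodOne s = 0 := dbl_injective <| by
    rw [map_nsmul, dbl_toQmodOne, smul_smul, map_zero]; exact h4
  induction s using QuotientAddGroup.induction_on with
  | H r =>
    obtain ⟨n, hn⟩ := (qmk1_eq_iff r _).mp (eq_half_of_two_nsmul_eq_zero h2 hs)
    rcases Int.even_or_odd n with ⟨c, rfl⟩ | ⟨c, rfl⟩
    · exact .inl ((qmk_eq_iff r _).mpr ⟨c, by push_cast at hn; linarith⟩)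
    · exact .inr ((qmk_eq_iff r _).mpr ⟨c + 1, by push_cast at hn ⊢; linarith⟩)

lemma toQmodOne_ne_zero_of_eq_half_or_eq_neg_half {s : QmodTwo}
    (hs : s = qmk (1 / 2) ∨ s = qmk (-(1 / 2))) : toQmodOne s ≠ 0 := by
  rcases hs with rfl | rfl
  · exact qmk1_half_ne_zero
  · change qmk1 (-(1 / 2)) ≠ 0
    rw [qmk1, QuotientAddGroup.mk_neg, neg_ne_zero]
    exact qmk1_half_ne_zero

lemma eq_zero_or_eq_of_mem_zmultiples {G : Type*} [AddGroup G] {x a : G} (hx : 2 • x = 0)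
    (ha : a ∈ AddSubgroup.zmultiples x) : a = 0 ∨ a = x := by
  have h2c (c : ℤ) : (2 * c) • x = 0 := by rw [mul_zsmul', ofNat_zsmul, hx, zsmul_zero]
  obtain ⟨n, rfl⟩ := AddSubgroup.mem_zmultiples_iff.mp ha
  rcases Int.even_or_odd n with ⟨c, rfl⟩ | ⟨c, rfl⟩
  · exact .inl (two_mul c ▸ h2c c)
  · exact .inr (by rw [add_zsmul, h2c, one_zsmul, zero_add])

namespace FinQuadForm

variable (F : FinQuadForm L)

lemma b_zsmul_left (n : ℤ) (x y : L) : F.b (n • x) y = n • F.b x y := by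
  rw [F.b_symm, F.b_symm x]
  exact map_zsmul (F.toHom y) n x

lemma b_nsmul_left (n : ℕ) (x y : L) : F.b (n • x) y = n • F.b x y := by
  rw [F.b_symm, F.b_symm x]
  exact map_nsmul (F.toHom y) n x

lemma b_zero_left (y : L) : F.b 0 y = 0 := by
  rw [F.b_symm]
  exact map_zero (F.toHom y)

lemma q_zero : F.q 0 = 0 := by
  simpa using F.q_zsmul 0 0

variable {F} {x : L}

lemma four_nsmul_q_eq_zero (hx : 2 • x = 0) : 4 • F.q x = 0 := by
  have := F.q_zsmul 2 x
  rw [ofNat_zsmul, hx, F.q_zero] at this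
  norm_num at this
  exact this.symm

lemma b_self_eq_neg_toQmodOne_q (hx : 2 • x = 0) : F.b x x = -toQmodOne (F.q x) := by
  apply dbl_injective
  have := F.q_add x x
  rw [← two_nsmul, hx, F.q_zero] at this
  rw [map_neg, dbl_toQmodOne, ← this, two_nsmul]
  abel

lemma isCompl_zmultiples_ker_toHom (hx : 2 • x = 0) (hxx : F.b x x ≠ 0) :
    IsCompl (AddSubgroup.zmultiples x) (F.toHom x).ker := by
  have eq_half {y : L} (hy : F.b x y ≠ 0) : F.b x y = qmk1 (1 / 2) :=
    eq_half_of_two_nsmul_eq_zero (by rw [← F.b_nsmul_left, hx, F.b_zero_left]) hy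
  refine ⟨AddSubgroup.disjoint_def.mpr fun {a} ha hker => ?_,
    codisjoint_iff.mpr ((AddSubgroup.eq_top_iff' _).mpr fun y => ?_)⟩
  · rcases eq_zero_or_eq_of_mem_zmultiples hx ha with rfl | rfl
    · rfl
    · exact absurd hker hxx
  · by_cases hy : F.b x y = 0
    · exact AddSubgroup.mem_sup_right hy
    refine AddSubgroup.mem_sup.mpr
      ⟨x, AddSubgroup.mem_zmultiples x, y - x, ?_, add_sub_cancel x y⟩
    change F.toHom x (y - x) = 0
    rw [map_sub, sub_eq_zero]
    exact (eq_half hy).trans (eq_half hxx).symm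

end FinQuadForm

theorem odd_iff_half_summand_general (L : Type) [AddCommGroup L]
    (F : FinQuadForm L) :
    (∃ x : L, addOrderOf x = 2 ∧ toQmodOne (F.q x) ≠ 0) ↔
    (∃ A A' : AddSubgroup L, IsCompl A A' ∧
      (∀ x ∈ A, ∀ y ∈ A', F.b x y = 0) ∧
      ∃ g : L, g ∈ A ∧ addOrderOf g = 2 ∧ (∀ a ∈ A, a ∈ AddSubgroup.zmultiples g) ∧
        (F.q g = qmk (1 / 2) ∨ F.q g = qmk (-(1 / 2)))) := by
  constructor
  · rintro ⟨x, hx2, hq⟩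
    have hx : 2 • x = 0 := hx2 ▸ addOrderOf_nsmul_eq_zero x
    have hxx : F.b x x ≠ 0 := by rwa [F.b_self_eq_neg_toQmodOne_q hx, neg_ne_zero]
    refine ⟨_, _, F.isCompl_zmultiples_ker_toHom hx hxx, ?_, x, AddSubgroup.mem_zmultiples x, hx2,
      fun _ ha => ha, eq_half_or_eq_neg_half (F.four_nsmul_q_eq_zero hx) hq⟩
    rintro _ ⟨n, rfl⟩ y (hy : F.b x y = 0)
    rw [F.b_zsmul_left, hy, smul_zero]
  · rintro ⟨-, -, -, -, g, -, hg2, -, hq⟩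
    exact ⟨g, hg2, toQmodOne_ne_zero_of_eq_half_or_eq_neg_half hq⟩

/-- STATEMENT 5: a nondegenerate finite quadratic form is odd (has an element of order 2
with `q(x) ≠ 0 mod ℤ`) if and only if it contains `⟨1/2⟩` or `⟨−1/2⟩` as an orthogonal
direct summand. -/
theorem odd_iff_half_summand (L : Type) [AddCommGroup L] [Finite L]
    (F : FinQuadForm L) (hnd : F.Nondegenerate) :
    (∃ x : L, addOrderOf x = 2 ∧ toQmodOne (F.q x) ≠ 0) ↔
    (∃ A A' : AddSubgroup L, IsCompl A A' ∧
      (∀ x ∈ A, ∀ y ∈ A', F.b x y = 0) ∧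
      ∃ g : L, g ∈ A ∧ addOrderOf g = 2 ∧ (∀ a ∈ A, a ∈ AddSubgroup.zmultiples g) ∧
        (F.q g = qmk (1 / 2) ∨ F.q g = qmk (-(1 / 2)))) :=
  odd_iff_half_summand_general L F

end
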